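/- Define f : ℝ² → ℝ by f(x) = |x₁| + |x₂|, F(x) = (x₁, x₂), and for Δ ∈ (0,1) define F̃_Δ(x) = (x₁ + Δ², x₂ + Δ²) and f̃_Δ(x) = |x₁ + Δ²| + |x₂ + Δ²|. Then: (i) {F̃_Δ : Δ ∈ (0,1)} are fully linear models of F at x̄ = (0,0) with constants κ_F = 1 and κ_G = 1, but F̃_Δ(0,0) ≠ F(0,0); (ii) f̃_Δ is differentiable at (0,0) with gradient (1,1), so its convex subdifferential at (0,0) is the singleton {(1,1)}; (iii) the vector (−1,−1) belongs to the convex subdifferential of f at (0,0); and (iv) the Euclidean distance from (−1,−1) to {(1,1)} equals √8, which does not converge to 0 as Δ → 0. -/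

import Mathlib

open Metric Set Filter

/-- `f(x) = |x₁| + |x₂|`. -/
def f10 (x : EuclideanSpace ℝ (Fin 2)) : ℝ := |x 0| + |x 1|

/-- `F(x) = (x₁, x₂)`, given by components. -/
def F10 (i : Fin 2) (x : EuclideanSpace ℝ (Fin 2)) : ℝ := x i

/-- `F̃_Δ(x) = (x₁ + Δ², x₂ + Δ²)`, given by components. -/
def Ft10 (Δ : ℝ) (i : Fin 2) (x : EuclideanSpace ℝ (Fin 2)) : ℝ := x i + Δ ^ 2

/-- `f̃_Δ(x) = |x₁ + Δ²| + |x₂ + Δ²|`. -/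
def ft10 (Δ : ℝ) (x : EuclideanSpace ℝ (Fin 2)) : ℝ := |x 0 + Δ ^ 2| + |x 1 + Δ ^ 2|

/-- The convex subdifferential of a real-valued function `h` at `x̄`:
`{v : h(x) ≥ h(x̄) + ⟨v, x − x̄⟩ for all x}`. -/
def rSubdiff (h : EuclideanSpace ℝ (Fin 2) → ℝ) (xbar : EuclideanSpace ℝ (Fin 2)) :
    Set (EuclideanSpace ℝ (Fin 2)) :=
  {v | ∀ x, h xbar + (inner ℝ v (x - xbar) : ℝ) ≤ h x}

/-! The model `F̃_Δ = F + Δ²` has exact gradients and values off by `Δ²`, so it is fully linear;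
but the shift moves the kinks of `f̃_Δ` away from the origin. On the ball of radius `Δ²` about `0`
the function `f̃_Δ` is the affine map `x ↦ x₁ + x₂ + 2Δ²`, so its only subgradient at `0` is its
gradient `(1,1)`, while the nonsmooth `f` has the subgradient `(−1,−1)` at `0`, at distance `√8`
from `(1,1)` whatever `Δ` is. -/

open InnerProductSpace

local notation "ℝ²" => EuclideanSpace ℝ (Fin 2)

theorem gradient_add_const {E : Type*} [NormedAddCommGroup E] [InnerProductSpace ℝ E]
    [CompleteSpace E] (f : E → ℝ) (c : ℝ) (x : E) :
    gradient (fun y => f y + c) x = gradient f x := by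
  rw [gradient, gradient, fderiv_add_const]

theorem hasGradientAt_inner_add_const {E : Type*} [NormedAddCommGroup E]
    [InnerProductSpace ℝ E] [CompleteSpace E] (v : E) (c : ℝ) (x : E) :
    HasGradientAt (fun y => inner ℝ v y + c) v x := by
  rw [hasGradientAt_iff_hasFDerivAt]
  exact ((toDual ℝ E v).hasFDerivAt.add_const c)

theorem inner_equiv_symm_pair (a b : ℝ) (x : ℝ²) :
    inner ℝ ((EuclideanSpace.equiv (Fin 2) ℝ).symm ![a, b]) x = a * x 0 + b * x 1 := by
  simp [PiLp.inner_apply, Fin.sum_univ_two, mul_comm]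

theorem eq_of_mem_rSubdiff_of_hasGradientAt {h : ℝ² → ℝ} {g v xbar : ℝ²}
    (hg : HasGradientAt h g xbar) (hv : v ∈ rSubdiff h xbar) : v = g := by
  -- `x̄` minimises `h - ⟪v, · - x̄⟫`, so the derivative `g - v` of that function vanishes there.
  have hmin : IsLocalMin (fun x => h x - toDual ℝ ℝ² v (x - xbar)) xbar :=
    Filter.Eventually.of_forall fun x => by
      simpa using le_sub_iff_add_le.mpr (hv x)
  have hderiv : HasFDerivAt (fun x => h x - toDual ℝ ℝ² v (x - xbar))
      (toDual ℝ ℝ² g - toDual ℝ ℝ² v) xbar :=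
    hg.hasFDerivAt.sub
      ((toDual ℝ ℝ² v).hasFDerivAt.comp xbar ((hasFDerivAt_id xbar).sub_const xbar))
  have := hmin.hasFDerivAt_eq_zero hderiv
  rw [sub_eq_zero] at this
  exact ((toDual ℝ ℝ²).injective this).symm

theorem contDiff_F10 {n : WithTop ℕ∞} (i : Fin 2) : ContDiff ℝ n (F10 i) :=
  (EuclideanSpace.proj (𝕜 := ℝ) i).contDiff

theorem contDiff_Ft10 {n : WithTop ℕ∞} (Δ : ℝ) (i : Fin 2) : ContDiff ℝ n (Ft10 Δ i) :=
  (contDiff_F10 i).add contDiff_const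

theorem abs_F10_sub_Ft10 (Δ : ℝ) (i : Fin 2) (y : ℝ²) : |F10 i y - Ft10 Δ i y| = Δ ^ 2 := by
  simp [F10, Ft10]

theorem gradient_Ft10 (Δ : ℝ) (i : Fin 2) (y : ℝ²) :
    gradient (Ft10 Δ i) y = gradient (F10 i) y :=
  gradient_add_const (F10 i) (Δ ^ 2) y

theorem Ft10_zero_ne {Δ : ℝ} (hΔ : Δ ≠ 0) (i : Fin 2) : Ft10 Δ i 0 ≠ F10 i 0 := by
  simpa [F10, Ft10] using hΔ

theorem ft10_zero (Δ : ℝ) : ft10 Δ 0 = 2 * Δ ^ 2 := by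
  simp only [ft10, PiLp.zero_apply, zero_add, abs_sq]
  ring

theorem ft10_eqOn_ball (Δ : ℝ) :
    EqOn (ft10 Δ)
      (fun x => inner ℝ ((EuclideanSpace.equiv (Fin 2) ℝ).symm ![1, 1]) x + 2 * Δ ^ 2)
      (ball 0 (Δ ^ 2)) := by
  intro x hx
  have hlt (i : Fin 2) : |x i| < Δ ^ 2 :=
    (PiLp.norm_apply_le x i).trans_lt (mem_ball_zero_iff.mp hx)
  have h0 := abs_lt.mp (hlt 0)
  have h1 := abs_lt.mp (hlt 1)
  simp only [ft10, inner_equiv_symm_pair]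
  rw [abs_of_pos (by linarith), abs_of_pos (by linarith)]
  ring

theorem hasGradientAt_ft10 {Δ : ℝ} (hΔ : Δ ≠ 0) :
    HasGradientAt (ft10 Δ) ((EuclideanSpace.equiv (Fin 2) ℝ).symm ![1, 1]) 0 :=
  (hasGradientAt_inner_add_const _ _ 0).congr_of_eventuallyEq <|
    eventually_of_mem (ball_mem_nhds 0 (by positivity)) (ft10_eqOn_ball Δ)

theorem one_mem_rSubdiff_ft10 (Δ : ℝ) :
    (EuclideanSpace.equiv (Fin 2) ℝ).symm ![1, 1] ∈ rSubdiff (ft10 Δ) 0 := by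
  intro x
  rw [ft10_zero, sub_zero, inner_equiv_symm_pair, ft10]
  linarith [le_abs_self (x 0 + Δ ^ 2), le_abs_self (x 1 + Δ ^ 2)]

theorem neg_one_mem_rSubdiff_f10 :
    (EuclideanSpace.equiv (Fin 2) ℝ).symm ![-1, -1] ∈ rSubdiff f10 0 := by
  intro x
  simp only [f10, sub_zero, inner_equiv_symm_pair, PiLp.zero_apply, abs_zero]
  linarith [neg_abs_le (x 0), neg_abs_le (x 1)]

theorem dist_pair (a b c d : ℝ) :
    dist ((EuclideanSpace.equiv (Fin 2) ℝ).symm ![a, b] : ℝ²)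
      ((EuclideanSpace.equiv (Fin 2) ℝ).symm ![c, d]) = √((a - c) ^ 2 + (b - d) ^ 2) := by
  simp [EuclideanSpace.dist_eq, Fin.sum_univ_two, Real.dist_eq]

/-- **Example 4.3** (importance of `F̃_Δ(x̄) = F(x̄)`): (i) the `Ft10 Δ` are fully linear
models of `F10` at `x̄ = (0,0)` with constants `κF = κG = 1` on `(0,1)`, but
`F̃_Δ(0,0) ≠ F(0,0)`; (ii) `f̃_Δ` is differentiable at `(0,0)` with gradient `(1,1)`, so
`∂f̃_Δ(0,0) = {(1,1)}`; (iii) `(−1,−1) ∈ ∂f(0,0)`; (iv) the distance from `(−1,−1)` to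
`{(1,1)}` is `√8`, which does not converge to `0` as `Δ → 0`. -/
theorem example_importance_of_center_agreement :
    -- (i) fully linear models, but disagreeing with F at the centre
    ((∀ i, ContDiff ℝ 1 (F10 i)) ∧
      (∀ Δ ∈ Ioo (0:ℝ) 1, (∀ i, ContDiff ℝ 1 (Ft10 Δ i)) ∧
        ∀ i, ∀ y ∈ ball (0 : EuclideanSpace ℝ (Fin 2)) Δ,
          |F10 i y - Ft10 Δ i y| ≤ 1 * Δ ^ 2 ∧
          ‖gradient (F10 i) y - gradient (Ft10 Δ i) y‖ ≤ 1 * Δ) ∧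
      ∀ Δ ∈ Ioo (0:ℝ) 1, ∃ i, Ft10 Δ i 0 ≠ F10 i 0) ∧
    -- (ii) f̃_Δ is differentiable at (0,0) with gradient (1,1), so ∂f̃_Δ(0,0) = {(1,1)}
    (∀ Δ ∈ Ioo (0:ℝ) 1,
      HasGradientAt (ft10 Δ) ((EuclideanSpace.equiv (Fin 2) ℝ).symm ![1, 1]) 0 ∧
      rSubdiff (ft10 Δ) 0 = {(EuclideanSpace.equiv (Fin 2) ℝ).symm ![1, 1]}) ∧
    -- (iii) (−1,−1) ∈ ∂f(0,0)
    ((EuclideanSpace.equiv (Fin 2) ℝ).symm ![-1, -1] ∈ rSubdiff f10 0) ∧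
    -- (iv) the distance from (−1,−1) to {(1,1)} is √8, not converging to 0
    (∀ Δ ∈ Ioo (0:ℝ) 1,
      infDist ((EuclideanSpace.equiv (Fin 2) ℝ).symm ![-1, -1])
        {((EuclideanSpace.equiv (Fin 2) ℝ).symm ![1, 1] : EuclideanSpace ℝ (Fin 2))} =
        Real.sqrt 8) ∧
    ¬ Tendsto (fun _ : ℝ =>
        infDist ((EuclideanSpace.equiv (Fin 2) ℝ).symm ![-1, -1])
          {((EuclideanSpace.equiv (Fin 2) ℝ).symm ![1, 1] : EuclideanSpace ℝ (Fin 2))})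
      (nhdsWithin 0 (Ioo (0:ℝ) 1)) (nhds 0) := by
  have hdist : infDist ((EuclideanSpace.equiv (Fin 2) ℝ).symm ![-1, -1] : ℝ²)
      {(EuclideanSpace.equiv (Fin 2) ℝ).symm ![1, 1]} = √8 := by
    rw [infDist_singleton, dist_pair]
    norm_num
  refine ⟨⟨fun i => contDiff_F10 i, fun Δ hΔ => ⟨fun i => contDiff_Ft10 Δ i, fun i y _ => ?_⟩,
      fun Δ hΔ => ⟨0, Ft10_zero_ne hΔ.1.ne' 0⟩⟩,
    fun Δ hΔ => ⟨hasGradientAt_ft10 hΔ.1.ne', ?_⟩, neg_one_mem_rSubdiff_f10,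
    fun _ _ => hdist, ?_⟩
  · rw [abs_F10_sub_Ft10, gradient_Ft10, sub_self, norm_zero, one_mul, one_mul]
    exact ⟨le_rfl, hΔ.1.le⟩
  · exact eq_singleton_iff_unique_mem.mpr ⟨one_mem_rSubdiff_ft10 Δ,
      fun v hv => eq_of_mem_rSubdiff_of_hasGradientAt (hasGradientAt_ft10 hΔ.1.ne') hv⟩
  · have := left_nhdsWithin_Ioo_neBot (zero_lt_one' ℝ)
    rw [hdist, tendsto_const_nhds_iff]
    positivity
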